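/- arXiv:2306.16360 — 4 statements merged into one kernel-verified Lean document; each statement's English description precedes it below -/
import Mathlib

section
/- (TEBD error bound.) Let H be a Hermitian n×n complex matrix, let E_1,…,E_d be linear maps on n×n complex matrices mapping density matrices to density matrices, and let Π_1,…,Π_{d−1} be linear maps on n×n complex matrices mapping Hermitian matrices to Hermitian matrices. Let ρ_0 be a density matrix and ρ_t = E_t(ρ_{t−1}). Define A_d = H and A_t = Π_t(E_{t+1}†(A_{t+1})) for t = d−1,…,1, set H_t = A_t − E_{t+1}†(A_{t+1}), E = Tr(H ρ_d), and E_TEBD = Tr(E_1(ρ_0) · A_1). Then |E − E_TEBD| ≤ Σ_{t=1}^{d−1} ‖H_t‖_F. -/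
/-! Heisenberg picture: by the adjoint relation `Tr(A E(ρ)) = Tr(E†(A) ρ)`, the values
`Tr(A_t ρ_t)` telescope, so `E_TEBD - E = ∑_t Tr(H_t ρ_t)`. Each term is bounded by
Cauchy–Schwarz for the Hilbert–Schmidt inner product, `|Tr(H_t ρ_t)| ≤ ‖H_t‖_F ‖ρ_t‖_F`, and
`‖ρ‖_F ≤ Tr ρ = 1` for a density matrix: writing `ρ = BᴴB`, submultiplicativity of the
Frobenius norm gives `‖ρ‖_F ≤ ‖B‖_F² = Tr ρ`. -/

open Matrix
open scoped ComplexOrder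

noncomputable def frobNorm {m : Type*} [Fintype m] (A : Matrix m m ℂ) : ℝ :=
  Real.sqrt (((Aᴴ * A).trace).re)

namespace Matrix

variable {m : Type*} [Fintype m]

lemma frobNorm_eq_norm_vec (A : Matrix m m ℂ) :
    frobNorm A = ‖(WithLp.toLp 2 (vec A) : EuclideanSpace ℂ (m × m))‖ := by
  rw [norm_eq_sqrt_re_inner (𝕜 := ℂ), EuclideanSpace.inner_toLp_toLp, dotProduct_comm,
    star_vec_dotProduct_vec, frobNorm]
  rfl

lemma norm_trace_conjTranspose_mul_le (A B : Matrix m m ℂ) :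
    ‖(Aᴴ * B).trace‖ ≤ frobNorm A * frobNorm B := by
  rw [frobNorm_eq_norm_vec, frobNorm_eq_norm_vec, ← star_vec_dotProduct_vec, dotProduct_comm,
    ← EuclideanSpace.inner_toLp_toLp]
  exact norm_inner_le_norm _ _

lemma frobNorm_conjTranspose (A : Matrix m m ℂ) : frobNorm Aᴴ = frobNorm A := by
  rw [frobNorm, frobNorm, conjTranspose_conjTranspose, trace_mul_comm]

attribute [local instance] frobeniusNormedAddCommGroup in
lemma frobNorm_eq_frobenius_norm (A : Matrix m m ℂ) : frobNorm A = ‖A‖ := by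
  rw [frobNorm_eq_norm_vec, EuclideanSpace.norm_eq, frobenius_norm_def, ← Real.sqrt_eq_rpow]
  simp only [Real.rpow_two, Fintype.sum_prod_type, vec]
  rw [Finset.sum_comm]

attribute [local instance] frobeniusNormedAddCommGroup in
lemma frobNorm_mul_le (A B : Matrix m m ℂ) : frobNorm (A * B) ≤ frobNorm A * frobNorm B := by
  simpa only [frobNorm_eq_frobenius_norm] using frobenius_norm_mul A B

open scoped MatrixOrder in
lemma PosSemidef.frobNorm_le_re_trace {ρ : Matrix m m ℂ} (hρ : ρ.PosSemidef) :
    frobNorm ρ ≤ ρ.trace.re := by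
  classical
  obtain ⟨B, rfl⟩ := CStarAlgebra.nonneg_iff_eq_star_mul_self.mp hρ.nonneg
  calc frobNorm (star B * B) ≤ frobNorm Bᴴ * frobNorm B := frobNorm_mul_le _ _
    _ = (Bᴴ * B).trace.re := by
      rw [frobNorm_conjTranspose, ← sq, frobNorm, Real.sq_sqrt]
      exact (Complex.nonneg_iff.mp (posSemidef_conjTranspose_mul_self B).trace_nonneg).1

lemma PosSemidef.norm_trace_mul_le {ρ : Matrix m m ℂ} (hρ : ρ.PosSemidef) (M : Matrix m m ℂ) :
    ‖(M * ρ).trace‖ ≤ frobNorm M * ρ.trace.re := by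
  calc ‖(M * ρ).trace‖ = ‖(Mᴴᴴ * ρ).trace‖ := by rw [conjTranspose_conjTranspose]
    _ ≤ frobNorm Mᴴ * frobNorm ρ := norm_trace_conjTranspose_mul_le _ _
    _ ≤ frobNorm M * ρ.trace.re := by
      rw [frobNorm_conjTranspose]
      exact mul_le_mul_of_nonneg_left hρ.frobNorm_le_re_trace (Real.sqrt_nonneg _)

lemma trace_mul_sub_trace_mul_eq_sum {R : Type*} [CommRing R]
    (E Estar : ℕ → Matrix m m R → Matrix m m R)
    (hadj : ∀ t A B, (A * E t B).trace = (Estar t A * B).trace)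
    (ρ A : ℕ → Matrix m m R) {d : ℕ} (hd : 1 ≤ d)
    (hstep : ∀ t, 1 ≤ t → t ≤ d → ρ t = E t (ρ (t - 1))) :
    (A 1 * ρ 1).trace - (A d * ρ d).trace
      = ∑ t ∈ Finset.Ico 1 d, ((A t - Estar (t + 1) (A (t + 1))) * ρ t).trace := by
  have hterm : ∀ t ∈ Finset.Ico 1 d, ((A t - Estar (t + 1) (A (t + 1))) * ρ t).trace
      = (A t * ρ t).trace - (A (t + 1) * ρ (t + 1)).trace := by
    intro t ht
    have ht := Finset.mem_Ico.mp ht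
    rw [sub_mul, trace_sub, ← hadj, hstep (t + 1) (by omega) (by omega), Nat.add_sub_cancel]
  rw [Finset.sum_congr rfl hterm, ← neg_sub, ← Finset.sum_Ico_sub (fun t ↦ (A t * ρ t).trace) hd,
    ← Finset.sum_neg_distrib]
  simp only [neg_sub]

lemma posSemidef_and_trace_eq_one_of_step (E : ℕ → Matrix m m ℂ → Matrix m m ℂ)
    (ρ : ℕ → Matrix m m ℂ) {d : ℕ}
    (hE : ∀ t, 1 ≤ t → t ≤ d → ∀ M : Matrix m m ℂ,
      M.PosSemidef → M.trace = 1 → (E t M).PosSemidef ∧ (E t M).trace = 1)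
    (hpsd : (ρ 0).PosSemidef) (htr : (ρ 0).trace = 1)
    (hstep : ∀ t, 1 ≤ t → t ≤ d → ρ t = E t (ρ (t - 1))) :
    ∀ t ≤ d, (ρ t).PosSemidef ∧ (ρ t).trace = 1 := by
  intro t
  induction t with
  | zero => exact fun _ ↦ ⟨hpsd, htr⟩
  | succ t ih =>
    intro ht
    obtain ⟨hpsd_t, htr_t⟩ := ih (by omega)
    rw [hstep (t + 1) (by omega) ht, Nat.add_sub_cancel]
    exact hE (t + 1) (by omega) ht _ hpsd_t htr_t

end Matrix

theorem tebd_error_bound_general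
    (n d : ℕ) (hd : 1 ≤ d)
    (H : Matrix (Fin n) (Fin n) ℂ)
    (E Estar : ℕ → Matrix (Fin n) (Fin n) ℂ →ₗ[ℂ] Matrix (Fin n) (Fin n) ℂ)
    (hadj : ∀ t (A B : Matrix (Fin n) (Fin n) ℂ),
      (A * E t B).trace = (Estar t A * B).trace)
    (hE : ∀ t, 1 ≤ t → t ≤ d → ∀ M : Matrix (Fin n) (Fin n) ℂ,
      M.PosSemidef → M.trace = 1 → (E t M).PosSemidef ∧ (E t M).trace = 1)
    (ρ : ℕ → Matrix (Fin n) (Fin n) ℂ)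
    (hpsd : (ρ 0).PosSemidef) (htr : (ρ 0).trace = 1)
    (hstep : ∀ t, 1 ≤ t → t ≤ d → ρ t = E t (ρ (t - 1)))
    (A : ℕ → Matrix (Fin n) (Fin n) ℂ)
    (hAd : A d = H)
    (HH : ℕ → Matrix (Fin n) (Fin n) ℂ)
    (hHH : ∀ t, 1 ≤ t → t < d → HH t = A t - Estar (t + 1) (A (t + 1))) :
    ‖(H * ρ d).trace - (E 1 (ρ 0) * A 1).trace‖
      ≤ ∑ t ∈ Finset.Icc 1 (d - 1), frobNorm (HH t) := by
  have hdensity := posSemidef_and_trace_eq_one_of_step (E · ·) ρ hE hpsd htr hstep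
  have htelescope := trace_mul_sub_trace_mul_eq_sum (E · ·) (Estar · ·) hadj ρ A hd hstep
  calc ‖(H * ρ d).trace - (E 1 (ρ 0) * A 1).trace‖
      = ‖∑ t ∈ Finset.Ico 1 d, (HH t * ρ t).trace‖ := by
        rw [← hAd, trace_mul_comm (E 1 (ρ 0)), ← hstep 1 le_rfl hd, norm_sub_rev, htelescope]
        congr 1
        refine Finset.sum_congr rfl fun t ht ↦ ?_
        rw [hHH t (Finset.mem_Ico.mp ht).1 (Finset.mem_Ico.mp ht).2]
    _ ≤ ∑ t ∈ Finset.Ico 1 d, ‖(HH t * ρ t).trace‖ := norm_sum_le _ _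
    _ ≤ ∑ t ∈ Finset.Ico 1 d, frobNorm (HH t) := by
        refine Finset.sum_le_sum fun t ht ↦ ?_
        obtain ⟨hpsd_t, htr_t⟩ := hdensity t (Finset.mem_Ico.mp ht).2.le
        simpa only [htr_t, Complex.one_re, mul_one] using hpsd_t.norm_trace_mul_le (HH t)
    _ = ∑ t ∈ Finset.Icc 1 (d - 1), frobNorm (HH t) := by
        rw [← Finset.Ico_add_one_right_eq_Icc, Nat.sub_add_cancel hd]

/-- **TEBD error bound.** With channels `E_t` mapping density matrices to
density matrices, compression maps `Π_t` mapping Hermitian matrices to Hermitian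
matrices, compressed Heisenberg-picture operators `A_d = H`,
`A_t = Π_t(E_{t+1}†(A_{t+1}))`, `H_t = A_t - E_{t+1}†(A_{t+1})`, true energy
`E = Tr(H ρ_d)` and TEBD estimate `E_TEBD = Tr(E₁(ρ₀)·A₁)`, one has
`|E - E_TEBD| ≤ ∑_{t=1}^{d-1} ‖H_t‖_F`. -/
theorem tebd_error_bound
    (n d : ℕ) (hd : 1 ≤ d)
    (H : Matrix (Fin n) (Fin n) ℂ) (hH : H.IsHermitian)
    (E Estar Pi : ℕ → Matrix (Fin n) (Fin n) ℂ →ₗ[ℂ] Matrix (Fin n) (Fin n) ℂ)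
    (hadj : ∀ t (A B : Matrix (Fin n) (Fin n) ℂ),
      (A * E t B).trace = (Estar t A * B).trace)
    (hE : ∀ t, 1 ≤ t → t ≤ d → ∀ M : Matrix (Fin n) (Fin n) ℂ,
      M.PosSemidef → M.trace = 1 → (E t M).PosSemidef ∧ (E t M).trace = 1)
    (hPi : ∀ t, 1 ≤ t → t < d → ∀ M : Matrix (Fin n) (Fin n) ℂ,
      M.IsHermitian → (Pi t M).IsHermitian)
    (ρ : ℕ → Matrix (Fin n) (Fin n) ℂ)
    (hpsd : (ρ 0).PosSemidef) (htr : (ρ 0).trace = 1)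
    (hstep : ∀ t, 1 ≤ t → t ≤ d → ρ t = E t (ρ (t - 1)))
    (A : ℕ → Matrix (Fin n) (Fin n) ℂ)
    (hAd : A d = H)
    (hAt : ∀ t, 1 ≤ t → t < d → A t = Pi t (Estar (t + 1) (A (t + 1))))
    (HH : ℕ → Matrix (Fin n) (Fin n) ℂ)
    (hHH : ∀ t, 1 ≤ t → t < d → HH t = A t - Estar (t + 1) (A (t + 1))) :
    ‖(H * ρ d).trace - (E 1 (ρ 0) * A 1).trace‖
      ≤ ∑ t ∈ Finset.Icc 1 (d - 1), frobNorm (HH t) :=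
  tebd_error_bound_general n d hd H E Estar hadj hE ρ hpsd htr hstep A hAd HH hHH
end

section
/- (Frobenius contraction of unital primitive qubit noise on traceless matrices.) Let U and V be 2×2 unitary matrices and let p_X, p_Y, p_Z ∈ (0,1) with p = p_X + p_Y + p_Z < 1. Define the single-qubit channel N(M) = (1−p)M + V(Σ_{P∈{X,Y,Z}} p_P · P U M U† P)V†, where X, Y, Z are the Pauli matrices. Then for every 2×2 complex matrix M with Tr(M) = 0, one has ‖N(M)‖_F ≤ (1 − min(p_X, p_Y, p_Z)) · ‖M‖_F. -/
/-!
Write `N(M) = (1 - p) M + V Φ(U M U†) V†` with `Φ(A) = ∑_P p_P · P A P`. The Frobenius norm is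
unitarily invariant, so by the triangle inequality it suffices to show `‖Φ(A)‖_F ≤ (p - min p_P) ‖A‖_F`
for traceless `A`. Such an `A` is a combination `x X + y Y + z Z`, with `‖A‖_F² = 2(|x|² + |y|² + |z|²)`,
and since each Pauli matrix commutes with itself and anticommutes with the other two, `Φ` scales the
coefficients by `p_X - p_Y - p_Z`, `p_Y - p_X - p_Z`, `p_Z - p_X - p_Y`, all of absolute value at
most `p - min p_P`.
-/

open Matrix

/-- Pauli `X` matrix. -/
def pauliX : Matrix (Fin 2) (Fin 2) ℂ := !![0, 1; 1, 0]

/-- Pauli `Y` matrix. -/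
def pauliY : Matrix (Fin 2) (Fin 2) ℂ := !![0, -Complex.I; Complex.I, 0]

/-- Pauli `Z` matrix. -/
def pauliZ : Matrix (Fin 2) (Fin 2) ℂ := !![1, 0; 0, -1]

/-- The unital primitive single-qubit noise channel
`N(M) = (1-p)M + V(∑_{P ∈ {X,Y,Z}} p_P · P U M U† P)V†`, where `p = p_X + p_Y + p_Z`. -/
noncomputable def chanN (U V : Matrix (Fin 2) (Fin 2) ℂ) (pX pY pZ : ℝ)
    (M : Matrix (Fin 2) (Fin 2) ℂ) : Matrix (Fin 2) (Fin 2) ℂ :=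
  (1 - ((pX : ℂ) + pY + pZ)) • M
    + V * ((pX : ℂ) • (pauliX * (U * M * Uᴴ) * pauliX)
         + (pY : ℂ) • (pauliY * (U * M * Uᴴ) * pauliY)
         + (pZ : ℂ) • (pauliZ * (U * M * Uᴴ) * pauliZ)) * Vᴴ

open Complex

theorem frobNorm_eq_sqrt_sum {m : Type*} [Fintype m] (A : Matrix m m ℂ) :
    frobNorm A = √(∑ i, ∑ j, ‖A i j‖ ^ 2) := by
  rw [frobNorm, Finset.sum_comm]
  congr 1
  simp only [trace, diag, mul_apply, conjTranspose_apply, RCLike.star_def, conj_mul', re_sum]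
  norm_cast

section Frobenius

attribute [local instance] Matrix.frobeniusSeminormedAddCommGroup Matrix.frobeniusNormSMulClass

theorem frobNorm_eq_norm {m : Type*} [Fintype m] (A : Matrix m m ℂ) : frobNorm A = ‖A‖ := by
  simp only [frobNorm_eq_sqrt_sum, frobenius_norm_def, Real.sqrt_eq_rpow, Real.rpow_two]

theorem frobNorm_add_le {m : Type*} [Fintype m] (A B : Matrix m m ℂ) :
    frobNorm (A + B) ≤ frobNorm A + frobNorm B := by
  simp only [frobNorm_eq_norm]
  exact norm_add_le A B

theorem frobNorm_smul {m : Type*} [Fintype m] (c : ℂ) (A : Matrix m m ℂ) :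
    frobNorm (c • A) = ‖c‖ * frobNorm A := by
  simp only [frobNorm_eq_norm]
  exact norm_smul c A

end Frobenius

theorem frobNorm_unitary_conj {m : Type*} [Fintype m] [DecidableEq m] {W : Matrix m m ℂ}
    (hW : W ∈ unitaryGroup m ℂ) (A : Matrix m m ℂ) : frobNorm (W * A * Wᴴ) = frobNorm A := by
  have hWW : Wᴴ * W = 1 := mem_unitaryGroup_iff'.mp hW
  have hconj : (W * A * Wᴴ)ᴴ * (W * A * Wᴴ) = W * (Aᴴ * A) * Wᴴ := by
    simp only [conjTranspose_mul, conjTranspose_conjTranspose, Matrix.mul_assoc]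
    rw [← Matrix.mul_assoc Wᴴ W, hWW, Matrix.one_mul]
  rw [frobNorm, frobNorm, hconj, trace_mul_cycle, ← Matrix.mul_assoc, hWW, Matrix.one_mul]

theorem trace_unitary_conj {m : Type*} [Fintype m] [DecidableEq m] {W : Matrix m m ℂ}
    (hW : W ∈ unitaryGroup m ℂ) (A : Matrix m m ℂ) : (W * A * Wᴴ).trace = A.trace := by
  have hWW : Wᴴ * W = 1 := mem_unitaryGroup_iff'.mp hW
  rw [trace_mul_cycle, hWW, Matrix.one_mul]

theorem exists_pauli_expansion {A : Matrix (Fin 2) (Fin 2) ℂ} (hA : A.trace = 0) :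
    ∃ x y z : ℂ, A = x • pauliX + y • pauliY + z • pauliZ := by
  refine ⟨(A 0 1 + A 1 0) / 2, I * (A 0 1 - A 1 0) / 2, A 0 0, ?_⟩
  have h11 : A 1 1 = -A 0 0 := by rw [trace_fin_two] at hA; linear_combination hA
  ext i j
  fin_cases i <;> fin_cases j <;> simp [pauliX, pauliY, pauliZ, h11] <;> grind [I_sq]

theorem frobNorm_pauli_expansion (x y z : ℂ) :
    frobNorm (x • pauliX + y • pauliY + z • pauliZ) = √(2 * (‖x‖ ^ 2 + ‖y‖ ^ 2 + ‖z‖ ^ 2)) := by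
  have hpar := parallelogram_law_with_norm ℂ x (y * I)
  rw [norm_mul, norm_I, mul_one] at hpar
  rw [frobNorm_eq_sqrt_sum]
  congr 1
  simp only [pauliX, pauliY, pauliZ, smul_of, smul_cons, smul_eq_mul, mul_zero, mul_one,
    smul_empty, mul_neg, of_add_of, add_cons, head_cons, add_zero, tail_cons, ← sub_eq_add_neg,
    empty_add_empty, Matrix.add_apply, of_apply, cons_val', cons_val_fin_one, Fin.sum_univ_two,
    Fin.isValue, cons_val_zero, cons_val_one, zero_add, zero_sub, norm_neg]
  linarith

theorem frobNorm_pauli_expansion_le {a b d c : ℝ} (ha : |a| ≤ c) (hb : |b| ≤ c) (hd : |d| ≤ c)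
    (x y z : ℂ) :
    frobNorm (((a : ℂ) * x) • pauliX + ((b : ℂ) * y) • pauliY + ((d : ℂ) * z) • pauliZ)
      ≤ c * frobNorm (x • pauliX + y • pauliY + z • pauliZ) := by
  have hc : 0 ≤ c := (abs_nonneg a).trans ha
  simp only [frobNorm_pauli_expansion, norm_mul, norm_real, Real.norm_eq_abs, mul_pow, sq_abs]
  rw [← Real.sqrt_sq hc, ← Real.sqrt_mul (sq_nonneg c)]
  apply Real.sqrt_le_sqrt
  have ha2 : a ^ 2 ≤ c ^ 2 := sq_abs a ▸ pow_le_pow_left₀ (abs_nonneg a) ha 2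
  have hb2 : b ^ 2 ≤ c ^ 2 := sq_abs b ▸ pow_le_pow_left₀ (abs_nonneg b) hb 2
  have hd2 : d ^ 2 ≤ c ^ 2 := sq_abs d ▸ pow_le_pow_left₀ (abs_nonneg d) hd 2
  linarith [mul_le_mul_of_nonneg_right ha2 (sq_nonneg ‖x‖),
    mul_le_mul_of_nonneg_right hb2 (sq_nonneg ‖y‖), mul_le_mul_of_nonneg_right hd2 (sq_nonneg ‖z‖)]

def pauliMix (pX pY pZ : ℝ) (A : Matrix (Fin 2) (Fin 2) ℂ) : Matrix (Fin 2) (Fin 2) ℂ :=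
  (pX : ℂ) • (pauliX * A * pauliX) + (pY : ℂ) • (pauliY * A * pauliY)
    + (pZ : ℂ) • (pauliZ * A * pauliZ)

theorem pauliMix_pauli_expansion (pX pY pZ : ℝ) (x y z : ℂ) :
    pauliMix pX pY pZ (x • pauliX + y • pauliY + z • pauliZ)
      = (((pX - pY - pZ : ℝ) : ℂ) * x) • pauliX + (((pY - pX - pZ : ℝ) : ℂ) * y) • pauliY
        + (((pZ - pX - pY : ℝ) : ℂ) * z) • pauliZ := by
  ext i j
  fin_cases i <;> fin_cases j <;>
    simp [pauliMix, pauliX, pauliY, pauliZ] <;> grind [I_sq]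

theorem frobNorm_pauliMix_le {pX pY pZ : ℝ} (hX : 0 ≤ pX) (hY : 0 ≤ pY) (hZ : 0 ≤ pZ)
    {A : Matrix (Fin 2) (Fin 2) ℂ} (hA : A.trace = 0) :
    frobNorm (pauliMix pX pY pZ A) ≤ (pX + pY + pZ - min pX (min pY pZ)) * frobNorm A := by
  obtain ⟨x, y, z, rfl⟩ := exists_pauli_expansion hA
  have hmX : min pX (min pY pZ) ≤ pX := min_le_left _ _
  have hmY : min pX (min pY pZ) ≤ pY := (min_le_right _ _).trans (min_le_left _ _)
  have hmZ : min pX (min pY pZ) ≤ pZ := (min_le_right _ _).trans (min_le_right _ _)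
  rw [pauliMix_pauli_expansion]
  apply frobNorm_pauli_expansion_le <;> rw [abs_le] <;> constructor <;> linarith

theorem chanN_eq (U V : Matrix (Fin 2) (Fin 2) ℂ) (pX pY pZ : ℝ) (M : Matrix (Fin 2) (Fin 2) ℂ) :
    chanN U V pX pY pZ M
      = ((1 - (pX + pY + pZ) : ℝ) : ℂ) • M + V * pauliMix pX pY pZ (U * M * Uᴴ) * Vᴴ := by
  rw [chanN, pauliMix]
  push_cast
  rfl

/-- **Frobenius contraction of unital primitive qubit noise on traceless
matrices.** For every traceless `2×2` matrix `M`,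
`‖N(M)‖_F ≤ (1 - min(p_X, p_Y, p_Z))·‖M‖_F`. -/
theorem frobenius_contraction_unital_primitive_noise
    (U V : Matrix (Fin 2) (Fin 2) ℂ)
    (hU : U ∈ Matrix.unitaryGroup (Fin 2) ℂ) (hV : V ∈ Matrix.unitaryGroup (Fin 2) ℂ)
    (pX pY pZ : ℝ)
    (hpX : pX ∈ Set.Ioo (0 : ℝ) 1) (hpY : pY ∈ Set.Ioo (0 : ℝ) 1)
    (hpZ : pZ ∈ Set.Ioo (0 : ℝ) 1) (hp : pX + pY + pZ < 1)
    (M : Matrix (Fin 2) (Fin 2) ℂ) (hM : M.trace = 0) :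
    frobNorm (chanN U V pX pY pZ M) ≤ (1 - min pX (min pY pZ)) * frobNorm M := by
  have hUMU : (U * M * Uᴴ).trace = 0 := (trace_unitary_conj hU M).trans hM
  have hMix := frobNorm_pauliMix_le hpX.1.le hpY.1.le hpZ.1.le hUMU
  rw [frobNorm_unitary_conj hU] at hMix
  calc frobNorm (chanN U V pX pY pZ M)
      ≤ frobNorm (((1 - (pX + pY + pZ) : ℝ) : ℂ) • M)
        + frobNorm (V * pauliMix pX pY pZ (U * M * Uᴴ) * Vᴴ) := by
        rw [chanN_eq]
        exact frobNorm_add_le _ _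
    _ ≤ (1 - (pX + pY + pZ)) * frobNorm M
        + (pX + pY + pZ - min pX (min pY pZ)) * frobNorm M := by
        rw [frobNorm_smul, norm_real, Real.norm_of_nonneg (by linarith), frobNorm_unitary_conj hV]
        gcongr
    _ = (1 - min pX (min pY pZ)) * frobNorm M := by ring
end

section
/- (Decomposition of full-Kraus-rank channels.) Let L_1, …, L_{d²} be a linearly independent family of d×d complex matrices with Σ_{i=1}^{d²} L_i† L_i = I, and let τ be a positive definite d×d complex matrix with Tr(τ) = 1 satisfying Σ_{i=1}^{d²} L_i τ L_i† = τ. Then there exist q ∈ (0,1) and d×d complex matrices M_1, …, M_{d²} such that: (i) Σ_{j} M_j† M_j = I; (ii) for every d×d complex matrix X, Σ_{i} L_i X L_i† = (1−q) Σ_{j} M_j X M_j† + q·Tr(X)·τ; and (iii) Σ_{j} M_j τ M_j† = τ. -/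
open Matrix
open scoped ComplexOrder

/-!
The Choi matrix `J_L = ∑ᵢ vec(Lᵢ) vec(Lᵢ)†` of the channel is positive definite, because the `d²`
linearly independent vectors `vec(Lᵢ)` span `ℂ^{d²}`, while the replacement channel `X ↦ Tr(X) τ`
has the positive semidefinite Choi matrix `τ ⊗ 1`. Hence `J_L - q (τ ⊗ 1) ≥ 0` for some small
`q > 0`, and factorising `(J_L - q (τ ⊗ 1)) / (1 - q) = W W†` with a `d² × d²` matrix `W` yields
the Kraus operators `Mⱼ` as the columns of `W`. Comparing traces in the resulting identity of
channels shows that the new channel is trace preserving, and evaluating it at `τ` that it fixes `τ`.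
-/

open scoped Kronecker

namespace Matrix

variable {𝕜 n ι : Type*} [RCLike 𝕜] [Fintype n] [Fintype ι]

def krausColumns (K : ι → Matrix n n 𝕜) : Matrix (n × n) ι 𝕜 :=
  of fun p i => K i p.1 p.2

/-- Indexed so that `choi K (a, b) (c, d) = ∑ i, K i a b * conj (K i c d)`. -/
def choi (K : ι → Matrix n n 𝕜) : Matrix (n × n) (n × n) 𝕜 :=
  krausColumns K * (krausColumns K)ᴴ

def ofChoi (C : Matrix (n × n) (n × n) 𝕜) (X : Matrix n n 𝕜) : Matrix n n 𝕜 :=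
  of fun a c => ∑ b, ∑ d, C (a, b) (c, d) * X b d

theorem ofChoi_choi (K : ι → Matrix n n 𝕜) (X : Matrix n n 𝕜) :
    ofChoi (choi K) X = ∑ i, K i * X * (K i)ᴴ := by
  ext a c
  simp only [ofChoi, choi, krausColumns, of_apply, mul_apply, conjTranspose_apply, sum_apply,
    Finset.sum_mul]
  rw [Finset.sum_congr rfl fun b _ => Finset.sum_comm, Finset.sum_comm]
  exact Finset.sum_congr rfl fun i _ => Finset.sum_comm.trans <| Finset.sum_congr rfl fun d _ =>
    Finset.sum_congr rfl fun b _ => mul_right_comm _ _ _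

theorem ofChoi_kronecker_one [DecidableEq n] (τ X : Matrix n n 𝕜) :
    ofChoi (τ ⊗ₖ 1) X = X.trace • τ := by
  ext a c
  simp [ofChoi, one_apply, trace, Finset.mul_sum, mul_comm]

theorem ofChoi_add (C D : Matrix (n × n) (n × n) 𝕜) (X : Matrix n n 𝕜) :
    ofChoi (C + D) X = ofChoi C X + ofChoi D X := by
  ext a c
  simp [ofChoi, add_mul, Finset.sum_add_distrib]

theorem ofChoi_smul {S : Type*} [DistribSMul S 𝕜] [IsScalarTower S 𝕜 𝕜] (s : S)
    (C : Matrix (n × n) (n × n) 𝕜) (X : Matrix n n 𝕜) :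
    ofChoi (s • C) X = s • ofChoi C X := by
  ext a c
  simp only [ofChoi, smul_apply, of_apply, smul_mul_assoc, Finset.smul_sum]

theorem choi_posDef {K : ι → Matrix n n 𝕜} (hK : LinearIndependent 𝕜 K)
    (hcard : Fintype.card ι = Fintype.card (n × n)) : (choi K).PosDef := by
  classical
  refine PosDef.mul_conjTranspose_self _ <|
    (injective_iff_map_eq_zero (vecMulLinear (krausColumns K))).mpr fun x hx => ?_
  let vecₗ := (ofLinearEquiv 𝕜).symm ≪≫ₗ (LinearEquiv.curry 𝕜 𝕜 n n).symm
  have hspan : Submodule.span 𝕜 (Set.range (vecₗ ∘ K)) = ⊤ :=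
    (hK.map' _ vecₗ.ker).span_eq_top_of_card_eq_finrank' (by simp [hcard])
  have horth : ∀ w : n × n → 𝕜, x ⬝ᵥ w = 0 := by
    intro w
    obtain ⟨c, rfl⟩ := (Submodule.mem_span_range_iff_exists_fun 𝕜).mp
      (hspan ▸ Submodule.mem_top (x := w))
    simp only [dotProduct_sum, dotProduct_smul]
    exact Finset.sum_eq_zero fun i _ => by
      rw [show x ⬝ᵥ (vecₗ ∘ K) i = 0 from congrFun hx i, smul_zero]
  ext p
  simpa using horth (Pi.single p 1)

open scoped MatrixOrder in
theorem exists_choi_eq [DecidableEq n] (e : ι ≃ n × n) {C : Matrix (n × n) (n × n) 𝕜}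
    (hC : C.PosSemidef) : ∃ K : ι → Matrix n n 𝕜, choi K = C := by
  obtain ⟨B, rfl⟩ := CStarAlgebra.nonneg_iff_eq_star_mul_self.mp hC.nonneg
  refine ⟨fun i => of fun a b => star (B (e i) (a, b)), ?_⟩
  have hcols : krausColumns (fun i => of fun a b => star (B (e i) (a, b))) = Bᴴ.submatrix id e :=
    rfl
  rw [choi, hcols, conjTranspose_submatrix, conjTranspose_conjTranspose, submatrix_mul_equiv,
    submatrix_id_id, star_eq_conjTranspose]

theorem trace_sum_mul_mul_conjTranspose (K : ι → Matrix n n 𝕜) (X : Matrix n n 𝕜) :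
    (∑ i, K i * X * (K i)ᴴ).trace = ((∑ i, (K i)ᴴ * K i) * X).trace := by
  simp only [trace_sum, Finset.sum_mul, trace_mul_cycle (K _)]

theorem sum_conjTranspose_mul_self_eq_one_iff [DecidableEq n] (K : ι → Matrix n n 𝕜) :
    ∑ i, (K i)ᴴ * K i = 1 ↔ ∀ X, (∑ i, K i * X * (K i)ᴴ).trace = X.trace := by
  simp only [trace_sum_mul_mul_conjTranspose, ext_iff_trace_mul_right (B := 1), one_mul]

open scoped MatrixOrder in
theorem PosDef.exists_sub_smul_posSemidef [DecidableEq n] {A B : Matrix n n 𝕜} (hA : A.PosDef)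
    (hB : B.IsHermitian) : ∃ q : ℝ, 0 < q ∧ q < 1 ∧ (A - q • B).PosSemidef := by
  cases isEmpty_or_nonempty n
  · exact ⟨1 / 2, by norm_num, by norm_num, Subsingleton.elim 0 (A - _) ▸ .zero⟩
  obtain ⟨r, hr, hrA⟩ := (CFC.exists_pos_algebraMap_le_iff hA.posSemidef.1).mpr
    fun _ => hA.isStrictlyPositive.spectrum_pos
  obtain ⟨R, hR⟩ :=
    (ContinuousFunctionalCalculus.isCompact_spectrum (R := ℝ) (p := IsSelfAdjoint) B).bddAbove
  have hBR : B ≤ algebraMap ℝ _ R := le_algebraMap_of_spectrum_le hR hB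
  set q := r / (r + |R| + 1)
  have hq : 0 < q := by positivity
  have hqR : q * R ≤ r := by
    rw [div_mul_eq_mul_div, div_le_iff₀ (by positivity)]
    nlinarith [le_abs_self R, abs_nonneg R]
  refine ⟨q, hq, (div_lt_one (by positivity)).mpr (by linarith [abs_nonneg R]), le_iff.mp ?_⟩
  calc q • B ≤ q • algebraMap ℝ _ R := smul_le_smul_of_nonneg_left hBR hq.le
    _ = (q * R) • (1 : Matrix n n 𝕜) := by rw [Algebra.algebraMap_eq_smul_one, smul_smul]
    _ ≤ r • 1 := smul_le_smul_of_nonneg_right hqR zero_le_one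
    _ ≤ A := by rwa [← Algebra.algebraMap_eq_smul_one]

end Matrix

/-- **decomposition of full-Kraus-rank channels.** Let `L_1,…,L_{d²}` be
linearly independent Kraus operators with `∑ L_i† L_i = I`, and let `τ` be a positive
definite density matrix fixed by the channel `X ↦ ∑ L_i X L_i†`. Then there exist
`q ∈ (0,1)` and Kraus operators `M_1,…,M_{d²}` with `∑ M_j† M_j = I` such that
`∑ L_i X L_i† = (1-q)·∑ M_j X M_j† + q·Tr(X)·τ` for every `X`, and `∑ M_j τ M_j† = τ`. -/
theorem full_kraus_rank_channel_decomposition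
    (d : ℕ) (L : Fin (d ^ 2) → Matrix (Fin d) (Fin d) ℂ)
    (hL : LinearIndependent ℂ L)
    (hsum : ∑ i, (L i)ᴴ * L i = 1)
    (τ : Matrix (Fin d) (Fin d) ℂ) (hτ : τ.PosDef) (hτtr : τ.trace = 1)
    (hfix : ∑ i, L i * τ * (L i)ᴴ = τ) :
    ∃ q : ℝ, 0 < q ∧ q < 1 ∧
      ∃ M : Fin (d ^ 2) → Matrix (Fin d) (Fin d) ℂ,
        (∑ j, (M j)ᴴ * M j = 1) ∧
        (∀ X : Matrix (Fin d) (Fin d) ℂ,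
          ∑ i, L i * X * (L i)ᴴ
            = (1 - (q : ℂ)) • (∑ j, M j * X * (M j)ᴴ) + ((q : ℂ) * X.trace) • τ) ∧
        (∑ j, M j * τ * (M j)ᴴ = τ) := by
  have hrepl : (τ ⊗ₖ (1 : Matrix (Fin d) (Fin d) ℂ)).PosSemidef := hτ.posSemidef.kronecker .one
  obtain ⟨q, hq0, hq1, hpos⟩ := (choi_posDef hL (by simp [sq])).exists_sub_smul_posSemidef hrepl.1
  have hq : (1 - q : ℝ) ≠ 0 := by linarith
  have hqC : (1 - q : ℂ) ≠ 0 := by exact_mod_cast hq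
  obtain ⟨M, hM⟩ := exists_choi_eq (finCongr (sq d) |>.trans finProdFinEquiv.symm)
    (hpos.smul (inv_nonneg.mpr (sub_nonneg.mpr hq1.le)))
  have hchoi : choi L = (1 - q) • choi M + q • τ ⊗ₖ 1 := by
    rw [hM, smul_smul, mul_inv_cancel₀ hq, one_smul, sub_add_cancel]
  have hΦ : ∀ X : Matrix (Fin d) (Fin d) ℂ, ∑ i, L i * X * (L i)ᴴ
      = (1 - (q : ℂ)) • (∑ j, M j * X * (M j)ᴴ) + ((q : ℂ) * X.trace) • τ := by
    intro X
    rw [← ofChoi_choi, hchoi, ofChoi_add, ofChoi_smul, ofChoi_smul, ofChoi_choi,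
      ofChoi_kronecker_one, ← Complex.coe_smul, ← Complex.coe_smul, smul_smul]
    push_cast
    rfl
  refine ⟨q, hq0, hq1, M, ?_, hΦ, ?_⟩
  · rw [sum_conjTranspose_mul_self_eq_one_iff] at hsum ⊢
    intro X
    have h := congrArg trace (hΦ X)
    rw [hsum, trace_add, trace_smul, trace_smul, hτtr, smul_eq_mul, smul_eq_mul] at h
    apply mul_left_cancel₀ hqC
    linear_combination -h
  · have h := hΦ τ
    rw [hfix, hτtr, mul_one] at h
    exact smul_right_injective _ hqC (by linear_combination (norm := module) -h)
end

section
/- (Quantum Gibbs variational principle used for the information-content dual.) Let H be a Hermitian n×n complex matrix and let λ > 0. Then the infimum over all density matrices ρ on ℂ^n of Tr(Hρ) − λ·S(ρ) equals −λ·log Tr(exp(−H/λ)), where S(ρ) = −Tr(ρ log ρ) is the von Neumann entropy and exp denotes the matrix exponential; the infimum is attained at the Gibbs state ρ = exp(−H/λ)/Tr(exp(−H/λ)). -/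
/-!
Diagonalise `H = V diag(k) V*` and `ρ = U diag(p) U*`. Then `Tr(Hρ) = ⟨p, M k⟩` with
`M = (|(U* V)ᵢⱼ|²)` doubly stochastic and `S(ρ) = -∑ pᵢ log pᵢ`, so the free energy of `ρ` is the
classical free energy of the distribution `p` in the energy levels `h = M k`. Gibbs' inequality
against the weights `exp(-hᵢ/λ)/Z(h)` bounds it below by `-λ log Z(h)`, and since `exp` is convex
and `M` doubly stochastic, `Z(h) ≤ Z(k) = Tr exp(-H/λ)`. The Gibbs state commutes with `H`
(`M = 1`), and for it the classical bound is an equality.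
-/

open Matrix
open scoped ComplexOrder

/-- The von Neumann entropy `S(ρ) = -∑ λᵢ log λᵢ` (natural logarithm) of a Hermitian
matrix, computed from its eigenvalues. -/
noncomputable def vnEntropy {n : Type*} [Fintype n] [DecidableEq n]
    {A : Matrix n n ℂ} (hA : A.IsHermitian) : ℝ :=
  -∑ i, hA.eigenvalues i * Real.log (hA.eigenvalues i)

/-- The (unnormalized) Gibbs matrix `exp(-H/λ)`, via the matrix exponential. -/
noncomputable def gibbsExp (n : ℕ) (H : Matrix (Fin n) (Fin n) ℂ) (lam : ℝ) :
    Matrix (Fin n) (Fin n) ℂ :=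
  NormedSpace.exp ((-(1 / lam) : ℂ) • H)

namespace Real

lemma mul_log_le_mul_log_add_sub {p r : ℝ} (hp : 0 ≤ p) (hr : 0 < r) :
    p * log r ≤ p * log p + (r - p) := by
  rcases hp.eq_or_lt with rfl | hp
  · simpa using hr.le
  · have h := log_le_sub_one_of_pos (div_pos hr hp)
    rw [log_div hr.ne' hp.ne', le_sub_iff_add_le] at h
    have h' := mul_le_mul_of_nonneg_left h hp.le
    rw [mul_div_cancel₀ _ hp.ne'] at h'
    linarith

variable {ι : Type*} [Fintype ι]

lemma sum_mul_log_le_sum_mul_log {p r : ι → ℝ} (hp : ∀ i, 0 ≤ p i) (hr : ∀ i, 0 < r i)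
    (hsum : ∑ i, r i ≤ ∑ i, p i) :
    ∑ i, p i * log (r i) ≤ ∑ i, p i * log (p i) := by
  have h := Finset.sum_le_sum fun i (_ : i ∈ Finset.univ) =>
    mul_log_le_mul_log_add_sub (hp i) (hr i)
  rw [Finset.sum_add_distrib, Finset.sum_sub_distrib] at h
  linarith

end Real

open Real

section PartitionFunction

variable {ι : Type*} [Fintype ι]

noncomputable def partitionFunction (k : ι → ℝ) (lam : ℝ) : ℝ :=
  ∑ i, exp (-(1 / lam) * k i)

noncomputable def gibbsWeights (k : ι → ℝ) (lam : ℝ) (i : ι) : ℝ :=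
  exp (-(1 / lam) * k i) / partitionFunction k lam

lemma partitionFunction_pos [Nonempty ι] (k : ι → ℝ) (lam : ℝ) : 0 < partitionFunction k lam :=
  Finset.sum_pos (fun _ _ => exp_pos _) Finset.univ_nonempty

lemma log_gibbsWeights [Nonempty ι] (k : ι → ℝ) (lam : ℝ) (i : ι) :
    log (gibbsWeights k lam i) = -(1 / lam) * k i - log (partitionFunction k lam) := by
  rw [gibbsWeights, log_div (exp_pos _).ne' (partitionFunction_pos k lam).ne', log_exp]

lemma sum_gibbsWeights [Nonempty ι] (k : ι → ℝ) (lam : ℝ) : ∑ i, gibbsWeights k lam i = 1 := by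
  simp only [gibbsWeights, ← Finset.sum_div]
  exact div_self (partitionFunction_pos k lam).ne'

lemma neg_mul_log_partitionFunction_le [Nonempty ι] {p : ι → ℝ} (hp : ∀ i, 0 ≤ p i)
    (hp1 : ∑ i, p i = 1) (h : ι → ℝ) {lam : ℝ} (hlam : 0 < lam) :
    -lam * log (partitionFunction h lam) ≤ p ⬝ᵥ h + lam * ∑ i, p i * log (p i) := by
  have hgibbs := sum_mul_log_le_sum_mul_log (r := gibbsWeights h lam) hp
    (fun i => div_pos (exp_pos _) (partitionFunction_pos h lam))
    ((sum_gibbsWeights h lam).trans hp1.symm).le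
  simp only [log_gibbsWeights, mul_sub, Finset.sum_sub_distrib,
    ← Finset.sum_mul, hp1, one_mul] at hgibbs
  have hph : ∑ i, p i * (-(1 / lam) * h i) = -(1 / lam) * (p ⬝ᵥ h) := by
    simp only [dotProduct, Finset.mul_sum]; congr 1; ext; ring
  rw [hph] at hgibbs
  have := mul_le_mul_of_nonneg_left hgibbs hlam.le
  field_simp at this
  linarith

lemma dotProduct_gibbsWeights_add_mul_sum [Nonempty ι] (k : ι → ℝ) {lam : ℝ} (hlam : lam ≠ 0) :
    gibbsWeights k lam ⬝ᵥ k + lam * ∑ i, gibbsWeights k lam i * log (gibbsWeights k lam i)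
      = -lam * log (partitionFunction k lam) := by
  simp only [log_gibbsWeights, dotProduct, Finset.mul_sum, ← Finset.sum_add_distrib]
  calc _ = ∑ i, -lam * log (partitionFunction k lam) * gibbsWeights k lam i := by
        congr 1; ext i; field_simp; ring
    _ = _ := by rw [← Finset.mul_sum, sum_gibbsWeights, mul_one]

variable [DecidableEq ι]

lemma ConvexOn.sum_comp_mulVec_le {f : ℝ → ℝ} (hf : ConvexOn ℝ Set.univ f) {M : Matrix ι ι ℝ}
    (hM : M ∈ doublyStochastic ℝ ι) (x : ι → ℝ) :
    ∑ i, f ((M *ᵥ x) i) ≤ ∑ i, f (x i) :=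
  calc ∑ i, f ((M *ᵥ x) i) ≤ ∑ i, ∑ j, M i j * f (x j) := by
        gcongr with i
        simpa [mulVec, dotProduct] using hf.map_sum_le (t := Finset.univ) (p := x)
          (fun j _ => nonneg_of_mem_doublyStochastic hM) (sum_row_of_mem_doublyStochastic hM i)
          (fun j _ => Set.mem_univ _)
    _ = ∑ j, f (x j) := by
        rw [Finset.sum_comm]
        simp [← Finset.sum_mul, sum_col_of_mem_doublyStochastic hM]

lemma partitionFunction_mulVec_le {M : Matrix ι ι ℝ} (hM : M ∈ doublyStochastic ℝ ι)
    (k : ι → ℝ) (lam : ℝ) : partitionFunction (M *ᵥ k) lam ≤ partitionFunction k lam := by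
  have h := convexOn_exp.sum_comp_mulVec_le hM (-(1 / lam) • k)
  rw [mulVec_smul] at h
  simpa [partitionFunction] using h

end PartitionFunction

section UnitaryConjugation

variable {ι : Type*} [Fintype ι] [DecidableEq ι]

namespace Matrix

lemma map_normSq_mem_doublyStochastic (U : unitaryGroup ι ℂ) :
    (U : Matrix ι ι ℂ).map Complex.normSq ∈ doublyStochastic ℝ ι := by
  have hrow (i : ι) : ∑ j, Complex.normSq (U i j) = 1 := by
    have h := congr_fun₂ (Unitary.coe_mul_star_self U) i i
    simp only [mul_apply, Unitary.coe_star, star_apply, one_apply_eq, RCLike.star_def,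
      Complex.mul_conj] at h
    exact_mod_cast h
  have hcol (j : ι) : ∑ i, Complex.normSq (U i j) = 1 := by
    have h := congr_fun₂ (Unitary.coe_star_mul_self U) j j
    simp only [mul_apply, star_apply, one_apply_eq, RCLike.star_def, mul_comm (starRingEnd ℂ _),
      Complex.mul_conj] at h
    exact_mod_cast h
  exact mem_doublyStochastic_iff_sum.2 ⟨fun i j => Complex.normSq_nonneg _, hrow, hcol⟩

lemma trace_unitary_mul_mul_star (U : unitaryGroup ι ℂ) (A : Matrix ι ι ℂ) :
    (U * A * star (U : Matrix ι ι ℂ)).trace = A.trace := by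
  rw [trace_mul_cycle, Unitary.coe_star_mul_self, one_mul]

lemma trace_diagonal_mul_mul_diagonal_mul_star (p k : ι → ℝ) (W : Matrix ι ι ℂ) :
    (diagonal (fun i => (p i : ℂ)) * W * diagonal (fun i => (k i : ℂ)) * star W).trace
      = ((p ⬝ᵥ (W.map Complex.normSq *ᵥ k) : ℝ) : ℂ) := by
  simp only [trace, diag, mul_apply (M := _ * diagonal _), mul_diagonal, diagonal_mul, star_apply,
    RCLike.star_def, dotProduct, mulVec, map_apply, Finset.mul_sum]
  push_cast
  refine Finset.sum_congr rfl fun i _ => Finset.sum_congr rfl fun j _ => ?_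
  rw [← Complex.mul_conj]
  ring

lemma trace_unitary_conj_diagonal_mul_unitary_conj_diagonal (V U : unitaryGroup ι ℂ)
    (k p : ι → ℝ) :
    ((V * diagonal (fun i => (k i : ℂ)) * star (V : Matrix ι ι ℂ))
        * (U * diagonal (fun i => (p i : ℂ)) * star (U : Matrix ι ι ℂ))).trace
      = ((p ⬝ᵥ (((star U * V : unitaryGroup ι ℂ) : Matrix ι ι ℂ).map Complex.normSq *ᵥ k) : ℝ)
          : ℂ) := by
  rw [← trace_diagonal_mul_mul_diagonal_mul_star]
  simp only [Submonoid.coe_mul, Unitary.coe_star, star_mul, star_star, ← Matrix.mul_assoc]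
  rw [trace_mul_cycle, trace_mul_comm]
  simp only [Matrix.mul_assoc]

lemma exp_unitary_mul_diagonal_mul_star (U : unitaryGroup ι ℂ) (d : ι → ℝ) :
    NormedSpace.exp (U * diagonal (fun i => (d i : ℂ)) * star (U : Matrix ι ι ℂ))
      = U * diagonal (fun i => (Real.exp (d i) : ℂ)) * star (U : Matrix ι ι ℂ) := by
  have h := exp_units_conj ⟨(U : Matrix ι ι ℂ), star (U : Matrix ι ι ℂ), by simp, by simp⟩
    (diagonal (fun i => (d i : ℂ)))
  simp only [Units.inv_mk, exp_diagonal] at h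
  rw [h]
  congr 3
  ext i
  simp [Complex.ofReal_exp, Complex.exp_eq_exp_ℂ]

namespace IsHermitian

lemma eq_unitary_mul_diagonal_mul_star {A : Matrix ι ι ℂ} (hA : A.IsHermitian) :
    A = hA.eigenvectorUnitary * diagonal (fun i => (hA.eigenvalues i : ℂ))
      * star (hA.eigenvectorUnitary : Matrix ι ι ℂ) := by
  conv_lhs => rw [hA.spectral_theorem, Unitary.conjStarAlgAut_apply]
  rfl

open Polynomial in
lemma sum_comp_eigenvalues_of_eq_unitary_mul_diagonal_mul_star {A : Matrix ι ι ℂ}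
    (hA : A.IsHermitian) (U : unitaryGroup ι ℂ) (d : ι → ℝ)
    (hAd : A = U * diagonal (fun i => (d i : ℂ)) * star (U : Matrix ι ι ℂ)) (g : ℝ → ℝ) :
    ∑ i, g (hA.eigenvalues i) = ∑ i, g (d i) := by
  have hroots : A.charpoly.roots = Finset.univ.val.map (fun i => (d i : ℂ)) := by
    rw [hAd, charpoly_mul_comm, ← mul_assoc, Unitary.coe_star_mul_self, one_mul,
      charpoly_diagonal, roots_prod _ _ (by simp [Finset.prod_ne_zero_iff, X_sub_C_ne_zero])]
    simp
  rw [hA.roots_charpoly_eq_eigenvalues] at hroots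
  have h := congr_arg (fun s => (s.map (g ∘ Complex.re)).sum) hroots
  simp only [Multiset.map_map] at h
  exact h

lemma exp_real_smul {A : Matrix ι ι ℂ} (hA : A.IsHermitian) (t : ℝ) :
    NormedSpace.exp ((t : ℂ) • A) = hA.eigenvectorUnitary
      * diagonal (fun i => (Real.exp (t * hA.eigenvalues i) : ℂ))
      * star (hA.eigenvectorUnitary : Matrix ι ι ℂ) := by
  have h : (t : ℂ) • A = hA.eigenvectorUnitary
      * diagonal (fun i => ((t * hA.eigenvalues i : ℝ) : ℂ))
      * star (hA.eigenvectorUnitary : Matrix ι ι ℂ) := by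
    conv_lhs => rw [hA.eq_unitary_mul_diagonal_mul_star]
    rw [← Matrix.smul_mul, ← Matrix.mul_smul, ← diagonal_smul]
    simp [Pi.smul_def]
  rw [h, exp_unitary_mul_diagonal_mul_star]

end IsHermitian

end Matrix

end UnitaryConjugation

section FreeEnergy

variable {ι : Type*} [Fintype ι] [DecidableEq ι]

lemma re_trace_mul_sub_mul_vnEntropy_eq {H ρ : Matrix ι ι ℂ} (hρ : ρ.IsHermitian)
    (V U : unitaryGroup ι ℂ) {k p : ι → ℝ}
    (hHV : H = V * diagonal (fun i => (k i : ℂ)) * star (V : Matrix ι ι ℂ))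
    (hρU : ρ = U * diagonal (fun i => (p i : ℂ)) * star (U : Matrix ι ι ℂ)) (lam : ℝ) :
    (H * ρ).trace.re - lam * vnEntropy hρ
      = p ⬝ᵥ (((star U * V : unitaryGroup ι ℂ) : Matrix ι ι ℂ).map Complex.normSq *ᵥ k)
        + lam * ∑ i, p i * log (p i) := by
  rw [vnEntropy, hρ.sum_comp_eigenvalues_of_eq_unitary_mul_diagonal_mul_star U p hρU
    (fun x => x * log x), hHV, hρU, trace_unitary_conj_diagonal_mul_unitary_conj_diagonal,
    Complex.ofReal_re]
  ring

theorem neg_mul_log_partitionFunction_le_re_trace_mul_sub [Nonempty ι] {H ρ : Matrix ι ι ℂ}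
    (hH : H.IsHermitian) {lam : ℝ} (hlam : 0 < lam) (hρ : ρ.PosSemidef) (htr : ρ.trace = 1) :
    -lam * log (partitionFunction hH.eigenvalues lam)
      ≤ (H * ρ).trace.re - lam * vnEntropy hρ.1 := by
  set W := star hρ.1.eigenvectorUnitary * hH.eigenvectorUnitary
  set M := (W : Matrix ι ι ℂ).map Complex.normSq
  have hp1 : ∑ i, hρ.1.eigenvalues i = 1 := by
    have h := hρ.1.trace_eq_sum_eigenvalues
    rw [htr] at h
    simpa using congr_arg Complex.re h.symm
  rw [re_trace_mul_sub_mul_vnEntropy_eq hρ.1 _ _ hH.eq_unitary_mul_diagonal_mul_star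
    hρ.1.eq_unitary_mul_diagonal_mul_star]
  calc -lam * log (partitionFunction hH.eigenvalues lam)
      ≤ -lam * log (partitionFunction (M *ᵥ hH.eigenvalues) lam) := by
        refine mul_le_mul_of_nonpos_left ?_ (by linarith)
        exact log_le_log (partitionFunction_pos _ _)
          (partitionFunction_mulVec_le (map_normSq_mem_doublyStochastic W) _ lam)
    _ ≤ _ := neg_mul_log_partitionFunction_le hρ.eigenvalues_nonneg hp1 _ hlam

noncomputable def gibbsState (H : Matrix ι ι ℂ) (lam : ℝ) : Matrix ι ι ℂ :=
  (NormedSpace.exp ((-(1 / lam) : ℂ) • H)).trace⁻¹ • NormedSpace.exp ((-(1 / lam) : ℂ) • H)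

namespace Matrix.IsHermitian

variable {H : Matrix ι ι ℂ}

lemma trace_exp_neg_one_div_smul (hH : H.IsHermitian) (lam : ℝ) :
    (NormedSpace.exp ((-(1 / lam) : ℂ) • H)).trace = partitionFunction hH.eigenvalues lam := by
  have h : (-(1 / lam) : ℂ) = ((-(1 / lam) : ℝ) : ℂ) := by push_cast; ring
  rw [h, hH.exp_real_smul, trace_unitary_mul_mul_star, trace_diagonal, partitionFunction]
  push_cast
  rfl

lemma gibbsState_eq [Nonempty ι] (hH : H.IsHermitian) (lam : ℝ) :
    gibbsState H lam = hH.eigenvectorUnitary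
      * diagonal (fun i => (gibbsWeights hH.eigenvalues lam i : ℂ))
      * star (hH.eigenvectorUnitary : Matrix ι ι ℂ) := by
  have h : (-(1 / lam) : ℂ) = ((-(1 / lam) : ℝ) : ℂ) := by push_cast; ring
  rw [gibbsState, hH.trace_exp_neg_one_div_smul, h, hH.exp_real_smul, ← Matrix.smul_mul,
    ← Matrix.mul_smul, ← diagonal_smul]
  congr 3
  ext i
  simp [gibbsWeights, div_eq_inv_mul]

lemma posSemidef_gibbsState [Nonempty ι] (hH : H.IsHermitian) (lam : ℝ) :
    (gibbsState H lam).PosSemidef := by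
  rw [hH.gibbsState_eq]
  refine (posSemidef_diagonal_iff.2 fun i => ?_).mul_mul_conjTranspose_same _
  exact_mod_cast (div_pos (exp_pos _) (partitionFunction_pos _ lam)).le

lemma trace_gibbsState [Nonempty ι] (hH : H.IsHermitian) (lam : ℝ) :
    (gibbsState H lam).trace = 1 := by
  rw [hH.gibbsState_eq, trace_unitary_mul_mul_star, trace_diagonal]
  exact_mod_cast sum_gibbsWeights hH.eigenvalues lam

lemma re_trace_mul_gibbsState_sub [Nonempty ι] (hH : H.IsHermitian) {lam : ℝ}
    (hlam : lam ≠ 0) (hσ : (gibbsState H lam).IsHermitian) :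
    (H * gibbsState H lam).trace.re - lam * vnEntropy hσ
      = -lam * log (partitionFunction hH.eigenvalues lam) := by
  rw [re_trace_mul_sub_mul_vnEntropy_eq hσ _ _ hH.eq_unitary_mul_diagonal_mul_star
    (hH.gibbsState_eq lam), Unitary.star_mul_self, OneMemClass.coe_one,
    Matrix.map_one _ Complex.normSq_zero Complex.normSq_one, one_mulVec]
  exact dotProduct_gibbsWeights_add_mul_sum hH.eigenvalues hlam

end Matrix.IsHermitian

end FreeEnergy

/-- **quantum Gibbs variational principle.** For Hermitian `H` and
`λ > 0`, the infimum over density matrices `ρ` of `Tr(Hρ) - λ·S(ρ)` equals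
`-λ·log Tr(exp(-H/λ))` (it is a least element, so the infimum is attained), and it is
attained at the Gibbs state `ρ = exp(-H/λ)/Tr(exp(-H/λ))`. -/
theorem gibbs_variational_principle
    (n : ℕ) (hn : 1 ≤ n)
    (H : Matrix (Fin n) (Fin n) ℂ) (hH : H.IsHermitian)
    (lam : ℝ) (hlam : 0 < lam) :
    IsLeast {x : ℝ | ∃ ρ : Matrix (Fin n) (Fin n) ℂ, ∃ hρ : ρ.PosSemidef,
        ρ.trace = 1 ∧ x = ((H * ρ).trace).re - lam * vnEntropy hρ.1}
      (-lam * Real.log (((gibbsExp n H lam).trace).re)) ∧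
    ∃ hG : (((gibbsExp n H lam).trace)⁻¹ • gibbsExp n H lam).PosSemidef,
      (((gibbsExp n H lam).trace)⁻¹ • gibbsExp n H lam).trace = 1 ∧
      ((H * (((gibbsExp n H lam).trace)⁻¹ • gibbsExp n H lam)).trace).re
          - lam * vnEntropy hG.1
        = -lam * Real.log (((gibbsExp n H lam).trace).re) := by
  have : Nonempty (Fin n) := ⟨⟨0, hn⟩⟩
  have hZ : ((gibbsExp n H lam).trace).re = partitionFunction hH.eigenvalues lam := by
    rw [gibbsExp, hH.trace_exp_neg_one_div_smul, Complex.ofReal_re]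
  have hσ : ∃ hσ : (gibbsState H lam).PosSemidef, (gibbsState H lam).trace = 1 ∧
      (H * gibbsState H lam).trace.re - lam * vnEntropy hσ.1
        = -lam * log (partitionFunction hH.eigenvalues lam) :=
    ⟨hH.posSemidef_gibbsState lam, hH.trace_gibbsState lam,
      hH.re_trace_mul_gibbsState_sub hlam.ne' _⟩
  rw [hZ]
  refine ⟨⟨?_, ?_⟩, hσ⟩
  · obtain ⟨hσ, htr, hval⟩ := hσ
    exact ⟨_, hσ, htr, hval.symm⟩
  · rintro _ ⟨ρ, hρ, htr, rfl⟩
    exact neg_mul_log_partitionFunction_le_re_trace_mul_sub hH hlam hρ htr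
end
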